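/- arXiv:2009.06839 — 3 statements merged into one kernel-verified Lean document; each statement's English description precedes it below -/
import Mathlib

section
/- Let N ≥ 1, k ≥ 1, λ ∈ ℤ^N with λ₁ ≥ λ₂ ≥ ⋯ ≥ λ_N, and p ∈ ℂ. Let u₂, …, u_{N+k} ∈ ℂ with e^{u₂}, …, e^{u_{N+k}} pairwise distinct, and v₁, …, v_k ∈ ℂ with e^{v₁}, …, e^{v_k} pairwise distinct, such that u_i ≠ v_j for all 2 ≤ i ≤ N+k and 1 ≤ j ≤ k, and e^{v₁} ∉ {e^{u₂}, …, e^{u_{N+k}}}. Then, in the punctured limit u₁ → v₁ (u₁ ≠ v₁), the supersymmetric Schur lift s_{λ,p}(e^{u₁}, e^{u₂}, …, e^{u_{N+k}} / e^{v₁}, …, e^{v_k}) converges to s_{λ,p}(e^{u₂}, …, e^{u_{N+k}} / e^{v₂}, …, e^{v_k}), where for k = 1 the limit is interpreted as the rational Schur function s_λ(e^{u₂}, …, e^{u_{N+1}}). -/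
open Complex Finset Filter Topology

noncomputable section

/-- Vandermonde product `Δ(w) = ∏_{i<j} (w i - w j)`. -/
def vprod {m : ℕ} (w : Fin m → ℂ) : ℂ :=
  ∏ i : Fin m, ∏ j : Fin m, if i < j then w i - w j else 1

/-- `D(x;y) = ∏_{i,j} (x i + y j)`. -/
def dprod {m n : ℕ} (x : Fin m → ℂ) (y : Fin n → ℂ) : ℂ :=
  ∏ i : Fin m, ∏ j : Fin n, (x i + y j)

/-- The `(N+k) × (N+k)` matrix `(E_p(u;v) | A_{λ+δ_N}(u))`: the first `k` columns have
entries `e^{p (u_i - v_j)}/(u_i - v_j)` and the last `N` columns have entries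
`e^{u_i (λ_j + N - j)}` (0-indexed: `λ_j + (N - 1 - j)`). -/
def schurLiftMatrix (N k : ℕ) (lam : Fin N → ℤ) (p : ℂ)
    (u : Fin (N + k) → ℂ) (v : Fin k → ℂ) :
    Matrix (Fin (N + k)) (Fin (N + k)) ℂ :=
  Matrix.of fun i j =>
    if h : (j : ℕ) < k then Complex.exp (p * (u i - v ⟨j, h⟩)) / (u i - v ⟨j, h⟩)
    else Complex.exp (u i *
      (((lam ⟨(j : ℕ) - k, by have := j.isLt; omega⟩ : ℤ) : ℂ) +
        (N : ℂ) - 1 - (((j : ℕ) - k : ℕ) : ℂ)))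

/-- The supersymmetric lift `s_{λ,p}(e^u / e^v)` of the rational Schur function:
`(-1)^{Nk} · ∏ e^{-v_i} · D(e^u;-e^v)/(Δ(e^u)Δ(-e^v)) · det(E_p(u;v) | A_{λ+δ_N}(u))`.
For `k = 0` this equals the rational Schur function `s_λ(e^{u_1}, …, e^{u_N})`. -/
def schurLift (N k : ℕ) (lam : Fin N → ℤ) (p : ℂ)
    (u : Fin (N + k) → ℂ) (v : Fin k → ℂ) : ℂ :=
  (-1 : ℂ) ^ (N * k) * (∏ i : Fin k, Complex.exp (-v i)) *
    (dprod (fun i => Complex.exp (u i)) (fun j => -Complex.exp (v j)) /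
      (vprod (fun i => Complex.exp (u i)) * vprod fun j => -Complex.exp (v j))) *
    (schurLiftMatrix N k lam p u v).det


/-!
Only the first row of `(E_p(u;v) | A_{λ+δ_N}(u))` depends on `u₁`, and among its entries only
`e^{p(u₁-v₁)}/(u₁-v₁)` has a pole at `u₁ = v₁`. Hence `(u₁ - v₁) · det` tends to the determinant
whose first row is `(1, 0, …, 0)`, which is the minor obtained by deleting `u₁` and `v₁`. The scalar
prefactor has a matching simple zero: `D(e^u; -e^v)` contains `e^{u₁} - e^{v₁}`, whose quotient by
`u₁ - v₁` tends to `e^{v₁}`; this cancels `e^{-v₁}`, and the remaining factors involving `u₁` or `v₁`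
cancel against those of the two Vandermonde products up to the sign `(-1)^N (-1)^k (-1)^{N+k} = 1`.
-/

section DetCons

variable {R : Type*} [CommRing R] {n : ℕ}

theorem Matrix.det_of_cons_smul (c : R) (r : Fin (n + 1) → R) (B : Fin n → Fin (n + 1) → R) :
    (Matrix.of (Fin.cons (c • r) B : Fin (n + 1) → Fin (n + 1) → R)).det =
      c * (Matrix.of (Fin.cons r B : Fin (n + 1) → Fin (n + 1) → R)).det := by
  have hrow (x : Fin (n + 1) → R) :
      (Matrix.of (Fin.cons r B : Fin (n + 1) → Fin (n + 1) → R)).updateRow 0 x =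
        Matrix.of (Fin.cons x B : Fin (n + 1) → Fin (n + 1) → R) :=
    Fin.update_cons_zero (α := fun _ => Fin (n + 1) → R) r B x
  rw [← hrow, Matrix.det_updateRow_smul, hrow]

theorem Matrix.det_of_cons_cons_one_zero (B : Fin n → Fin (n + 1) → R) :
    (Matrix.of (Fin.cons (Fin.cons 1 0) B : Fin (n + 1) → Fin (n + 1) → R)).det =
      (Matrix.of fun i j => B i j.succ).det := by
  rw [Matrix.det_succ_row_zero, Fin.sum_univ_succ]
  simp [Matrix.submatrix]

theorem tendsto_det_of_cons [TopologicalSpace R] [IsTopologicalRing R] {α : Type*}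
    {l : Filter α} {r : α → Fin (n + 1) → R} (B : Fin n → Fin (n + 1) → R)
    (hr : Tendsto r l (𝓝 (Fin.cons 1 0))) :
    Tendsto (fun a => (Matrix.of (Fin.cons (r a) B : Fin (n + 1) → Fin (n + 1) → R)).det) l
      (𝓝 (Matrix.of fun i j => B i j.succ).det) := by
  rw [← Matrix.det_of_cons_cons_one_zero]
  have hcont : Continuous fun x : Fin (n + 1) → R =>
      (Matrix.of (Fin.cons x B : Fin (n + 1) → Fin (n + 1) → R)).det :=
    (continuous_id.finCons continuous_const).matrix_det
  exact hcont.continuousAt.tendsto.comp hr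

end DetCons

theorem vprod_cons {m : ℕ} (a : ℂ) (w : Fin m → ℂ) :
    vprod (Fin.cons a w) = (∏ i, (a - w i)) * vprod w := by
  simp [vprod, Fin.prod_univ_succ, Fin.succ_lt_succ_iff]

theorem dprod_cons_left {m n : ℕ} (a : ℂ) (x : Fin m → ℂ) (y : Fin n → ℂ) :
    dprod (Fin.cons a x) y = (∏ j, (a + y j)) * dprod x y := by
  simp [dprod, Fin.prod_univ_succ]

theorem dprod_cons_right {m n : ℕ} (x : Fin m → ℂ) (b : ℂ) (y : Fin n → ℂ) :
    dprod x (Fin.cons b y) = (∏ i, (x i + b)) * dprod x y := by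
  simp [dprod, Fin.prod_univ_succ, Finset.prod_mul_distrib]

section SchurLiftRow

variable (N : ℕ) {k : ℕ} (lam : Fin N → ℤ) (p : ℂ)

def schurLiftRow (v : Fin k → ℂ) (x : ℂ) : Fin (N + k) → ℂ := fun j =>
  if h : (j : ℕ) < k then Complex.exp (p * (x - v ⟨j, h⟩)) / (x - v ⟨j, h⟩)
  else Complex.exp (x *
    (((lam ⟨(j : ℕ) - k, by have := j.isLt; omega⟩ : ℤ) : ℂ) +
      (N : ℂ) - 1 - (((j : ℕ) - k : ℕ) : ℂ)))

theorem schurLiftMatrix_eq_of_schurLiftRow (u : Fin (N + k) → ℂ) (v : Fin k → ℂ) :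
    schurLiftMatrix N k lam p u v = Matrix.of fun i => schurLiftRow N lam p v (u i) :=
  rfl

theorem schurLiftRow_cons (y : ℂ) (w : Fin k → ℂ) (x : ℂ) :
    schurLiftRow N lam p (Fin.cons y w) x =
      Fin.cons (Complex.exp (p * (x - y)) / (x - y)) (schurLiftRow N lam p w x) := by
  funext j
  refine Fin.cases ?_ (fun j => ?_) j
  · simp [schurLiftRow]
  · by_cases h : (j : ℕ) < k <;> simp [schurLiftRow, h, ← Fin.succ_mk]

theorem continuousAt_schurLiftRow {v : Fin k → ℂ} {x : ℂ} (hx : ∀ j, x ≠ v j) :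
    ContinuousAt (schurLiftRow N lam p v) x := by
  refine continuousAt_pi.2 fun j => ?_
  unfold schurLiftRow
  split_ifs with h
  · have := sub_ne_zero.2 (hx ⟨j, h⟩)
    fun_prop (disch := assumption)
  · fun_prop

theorem tendsto_sub_mul_det_schurLiftMatrix_cons (u : Fin (N + k) → ℂ) {y : ℂ} {w : Fin k → ℂ}
    (hyw : ∀ j, y ≠ w j) :
    Tendsto (fun z => (z - y) *
        (schurLiftMatrix N (k + 1) lam p (Fin.cons z u) (Fin.cons y w)).det)
      (𝓝[≠] y) (𝓝 (schurLiftMatrix N k lam p u w).det) := by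
  set row := schurLiftRow N lam p (Fin.cons y w) with hrow_def
  have hmatrix (z : ℂ) : schurLiftMatrix N (k + 1) lam p (Fin.cons z u) (Fin.cons y w) =
      Matrix.of (Fin.cons (row z) (fun i => row (u i)) :
        Fin (N + k + 1) → Fin (N + k + 1) → ℂ) := by
    rw [schurLiftMatrix_eq_of_schurLiftRow]
    exact congrArg Matrix.of (Fin.comp_cons row z u)
  have hminor : (Matrix.of fun i j => row (u i) j.succ) = schurLiftMatrix N k lam p u w := by
    ext i j
    simp [row, schurLiftRow_cons, schurLiftMatrix_eq_of_schurLiftRow]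
  have hsplit (z : ℂ) : (z - y) • row z = Fin.cons
      ((z - y) • (Complex.exp (p * (z - y)) / (z - y))) ((z - y) • schurLiftRow N lam p w z) := by
    rw [hrow_def, schurLiftRow_cons]
    exact Matrix.smul_cons _ _ _
  have hrow : Tendsto (fun z => (z - y) • row z) (𝓝[≠] y) (𝓝 (Fin.cons 1 0)) := by
    simp only [hsplit]
    refine Tendsto.finCons ?_ ?_
    · have hexp : Tendsto (fun z => Complex.exp (p * (z - y))) (𝓝[≠] y) (𝓝 1) := by
        have h : ContinuousAt (fun z => Complex.exp (p * (z - y))) y := by fun_prop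
        simpa using h.tendsto.mono_left nhdsWithin_le_nhds
      refine hexp.congr' (eventually_nhdsWithin_of_forall fun z hz => ?_)
      exact (mul_div_cancel₀ _ (sub_ne_zero.2 hz)).symm
    · have hcont : ContinuousAt (fun z => (z - y) • schurLiftRow N lam p w z) y :=
        (continuousAt_id.sub continuousAt_const).smul (continuousAt_schurLiftRow N lam p hyw)
      simpa using hcont.tendsto.mono_left nhdsWithin_le_nhds
  rw [← hminor]
  refine (tendsto_det_of_cons _ hrow).congr' (eventually_nhdsWithin_of_forall fun z _ => ?_)
  simp only [hmatrix, Matrix.det_of_cons_smul]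
  rfl

end SchurLiftRow

section SchurPrefactor

variable (N : ℕ) {k : ℕ}

def schurPrefactor (a : Fin (N + k) → ℂ) (b : Fin k → ℂ) : ℂ :=
  (-1) ^ (N * k) * (∏ j, (b j)⁻¹) * (dprod a (fun j => -b j) / (vprod a * vprod fun j => -b j))

theorem schurLift_eq_schurPrefactor_mul_det (lam : Fin N → ℤ) (p : ℂ) (u : Fin (N + k) → ℂ)
    (v : Fin k → ℂ) :
    schurLift N k lam p u v =
      schurPrefactor N (Complex.exp ∘ u) (Complex.exp ∘ v) *
        (schurLiftMatrix N k lam p u v).det := by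
  simp only [schurLift, schurPrefactor, Complex.exp_neg, Function.comp_def]

def schurConsFactor (a : Fin (N + k) → ℂ) (b : Fin k → ℂ) (y x : ℂ) : ℂ :=
  (-1) ^ N * y⁻¹ * ((∏ j, (x - b j)) / ∏ j, (b j - y)) * ((∏ i, (a i - y)) / ∏ i, (x - a i))

theorem schurPrefactor_cons (a : Fin (N + k) → ℂ) (b : Fin k → ℂ) (x y : ℂ) :
    schurPrefactor N (k := k + 1) (Fin.cons x a) (Fin.cons y b) =
      (x - y) * schurConsFactor N a b y x * schurPrefactor N a b := by
  have hneg : (fun j => -(Fin.cons y b : Fin (k + 1) → ℂ) j) = Fin.cons (-y) (fun j => -b j) := by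
    funext j
    refine Fin.cases ?_ (fun j => ?_) j <;> simp
  simp only [schurPrefactor, schurConsFactor, hneg]
  rw [dprod_cons_left (m := N + k), dprod_cons_right, vprod_cons (m := N + k), vprod_cons]
  simp only [Fin.prod_univ_succ, Fin.cons_zero, Fin.cons_succ]
  ring_nf

theorem schurConsFactor_self {a : Fin (N + k) → ℂ} {b : Fin k → ℂ} {y : ℂ}
    (ha : ∀ i, a i ≠ y) (hb : ∀ j, b j ≠ y) : schurConsFactor N a b y y = y⁻¹ := by
  have hb_ne : ∏ j, (b j - y) ≠ 0 := prod_ne_zero_iff.2 fun j _ => sub_ne_zero.2 (hb j)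
  have ha_ne : ∏ i, (y - a i) ≠ 0 := prod_ne_zero_iff.2 fun i _ => sub_ne_zero.2 (ha i).symm
  have hb_swap : ∏ j, (y - b j) = (-1) ^ k * ∏ j, (b j - y) := by
    simpa using Finset.prod_neg (s := univ) fun j => b j - y
  have ha_swap : ∏ i, (a i - y) = (-1) ^ (N + k) * ∏ i, (y - a i) := by
    simpa using Finset.prod_neg (s := univ) fun i => y - a i
  have hsign : (-1 : ℂ) ^ N * (-1) ^ k * (-1) ^ (N + k) = 1 := by
    rw [← pow_add, ← pow_add]
    exact Even.neg_one_pow ⟨N + k, by ring⟩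
  rw [schurConsFactor, hb_swap, ha_swap, mul_div_cancel_right₀ _ hb_ne,
    mul_div_cancel_right₀ _ ha_ne]
  linear_combination y⁻¹ * hsign

theorem continuousAt_schurConsFactor {a : Fin (N + k) → ℂ} (b : Fin k → ℂ) {y : ℂ}
    (ha : ∀ i, a i ≠ y) : ContinuousAt (schurConsFactor N a b y) y := by
  have ha_ne : ∏ i, (y - a i) ≠ 0 := prod_ne_zero_iff.2 fun i _ => sub_ne_zero.2 (ha i).symm
  unfold schurConsFactor
  fun_prop (disch := exact ha_ne)

theorem tendsto_schurPrefactor_cons_exp_div (a : Fin (N + k) → ℂ) (b : Fin k → ℂ) {y : ℂ}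
    (ha : ∀ i, a i ≠ Complex.exp y) (hb : ∀ j, b j ≠ Complex.exp y) :
    Tendsto (fun z => schurPrefactor N (k := k + 1) (Fin.cons (Complex.exp z) a)
        (Fin.cons (Complex.exp y) b) / (z - y))
      (𝓝[≠] y) (𝓝 (schurPrefactor N a b)) := by
  have hslope : Tendsto (slope Complex.exp y) (𝓝[≠] y) (𝓝 (Complex.exp y)) :=
    hasDerivAt_iff_tendsto_slope.1 (Complex.hasDerivAt_exp y)
  have hfactor : Tendsto (fun z => schurConsFactor N a b (Complex.exp y) (Complex.exp z))
      (𝓝[≠] y) (𝓝 (Complex.exp y)⁻¹) := by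
    rw [← schurConsFactor_self N ha hb]
    exact ((continuousAt_schurConsFactor N b ha).comp
      Complex.continuous_exp.continuousAt).tendsto.mono_left nhdsWithin_le_nhds
  have hlim := (hslope.mul hfactor).mul_const (schurPrefactor N a b)
  rw [mul_inv_cancel₀ (Complex.exp_ne_zero y), one_mul] at hlim
  refine hlim.congr fun z => ?_
  rw [schurPrefactor_cons, slope_def_field]
  ring

end SchurPrefactor

theorem statement1_general (N k : ℕ) (lam : Fin N → ℤ) (p : ℂ)
    (u : Fin (N + k) → ℂ) (v : Fin (k + 1) → ℂ)
    (hv : Function.Injective fun j => Complex.exp (v j))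
    (hev : ∀ i : Fin (N + k), Complex.exp (v 0) ≠ Complex.exp (u i)) :
    Tendsto (fun z : ℂ => schurLift N (k + 1) lam p (Fin.cons z u) v)
      (𝓝[≠] (v 0)) (𝓝 (schurLift N k lam p u (Fin.tail v))) := by
  obtain ⟨y, w, rfl⟩ : ∃ y w, v = Fin.cons y w := ⟨v 0, Fin.tail v, (Fin.cons_self_tail v).symm⟩
  simp only [Fin.cons_zero, Fin.tail_cons] at hev ⊢
  have hwy (j : Fin k) : Complex.exp (w j) ≠ Complex.exp y := fun h =>
    Fin.succ_ne_zero j (hv (by simpa using h))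
  have hpre := tendsto_schurPrefactor_cons_exp_div N (Complex.exp ∘ u) (Complex.exp ∘ w)
    (fun i => (hev i).symm) hwy
  have hdet := tendsto_sub_mul_det_schurLiftMatrix_cons N lam p u
    fun j h => hwy j (congrArg Complex.exp h).symm
  rw [schurLift_eq_schurPrefactor_mul_det]
  refine (hpre.mul hdet).congr' (eventually_nhdsWithin_of_forall fun z hz => ?_)
  simp only [schurLift_eq_schurPrefactor_mul_det, Fin.comp_cons]
  field_simp [sub_ne_zero.2 hz]

/-- In the punctured limit `u₁ → v₁`, the supersymmetric Schur lift
`s_{λ,p}(e^{u₁}, e^{u₂}, …, e^{u_{N+k}} / e^{v₁}, …, e^{v_k})` converges to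
`s_{λ,p}(e^{u₂}, …, e^{u_{N+k}} / e^{v₂}, …, e^{v_k})` (which, for `k = 1`, is the
rational Schur function `s_λ(e^{u₂}, …, e^{u_{N+1}})`).  Here the number of dual
variables is `k + 1 ≥ 1`. -/
theorem statement1 (N k : ℕ) (hN : 1 ≤ N) (lam : Fin N → ℤ) (hlam : Antitone lam) (p : ℂ)
    (u : Fin (N + k) → ℂ) (v : Fin (k + 1) → ℂ)
    (hu : Function.Injective fun i => Complex.exp (u i))
    (hv : Function.Injective fun j => Complex.exp (v j))
    (huv : ∀ (i : Fin (N + k)) (j : Fin (k + 1)), u i ≠ v j)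
    (hev : ∀ i : Fin (N + k), Complex.exp (v 0) ≠ Complex.exp (u i)) :
    Tendsto (fun z : ℂ => schurLift N (k + 1) lam p (Fin.cons z u) v)
      (𝓝[≠] (v 0)) (𝓝 (schurLift N k lam p u (Fin.tail v))) :=
  statement1_general N k lam p u v hv hev
end
end

section
/- Let μ be a Borel probability measure on ℝ with compact support, let z₀ ∈ ℂ ∖ supp μ with u := G_μ(z₀) ≠ 0, and let c ∈ ℝ. Define Φ_{μ,u}(z) := Re(z·u) − ∫ log|z − x| dμ(x) − log|u| for z ∈ ℂ ∖ supp μ. Then the set {z ∈ ℂ ∖ supp μ : Φ_{μ,u}(z) > c} has exactly one unbounded connected component (that is, it has an unbounded connected component, and any two unbounded connected components of it coincide), and likewise the set {z ∈ ℂ ∖ supp μ : Φ_{μ,u}(z) < c} has exactly one unbounded connected component. -/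
open MeasureTheory Filter Topology

noncomputable section

/-- The (topological) support of a measure on `ℝ`: the set of points all of whose open
neighborhoods have positive measure. -/
def msupp (μ : Measure ℝ) : Set ℝ :=
  {x : ℝ | ∀ U : Set ℝ, IsOpen U → x ∈ U → 0 < μ U}

open Set Bornology ComplexConjugate

/-!
Let `a = ‖u‖` and `supp μ ⊆ [-M, M]`. For `‖z‖ > M` the log potential `L z = ∫ log ‖z - x‖ dμ`
lies between `log (‖z‖ - M)` and `log (‖z‖ + M)`, and `L p - L q ≤ ‖p - q‖ / (‖q‖ - M)`. Along
`s ↦ z + s • conj u` the term `Re (z u)` grows at rate `a²`, faster than `L` as soon as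
`‖z‖ ≥ M + 1/a`, so there `Φ` is nondecreasing in the direction `conj u`.

Far points of `{Φ > c}` have `Re (z u) > M a`, so the ray from such a point in direction
`conj u` stays far from the support, stays in `{Φ > c}`, and ends in the convex cone
`{K + a ‖z‖ / 2 ≤ Re (z u)} ⊆ {Φ > c}`. Far points of `{Φ < c}` have `2 Re (z u) ≤ a ‖z‖`, so
the ray in direction `-conj u` keeps norm at least `‖z‖ / 2`, stays in `{Φ < c}`, and ends in
a half-plane `{Re (z u) ≤ -K'} ⊆ {Φ < c}`. An unbounded component contains far points, hence
meets the cone (resp. the half-plane), which is connected and unbounded.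
-/

section UnboundedComponent

variable {E : Type*}

def HasUniqueUnboundedComponent [TopologicalSpace E] [Bornology E] (S : Set E) : Prop :=
  (∃ z ∈ S, ¬IsBounded (connectedComponentIn S z)) ∧
    ∀ z ∈ S, ∀ w ∈ S, ¬IsBounded (connectedComponentIn S z) →
      ¬IsBounded (connectedComponentIn S w) →
      connectedComponentIn S z = connectedComponentIn S w

lemma add_smul_mem_connectedComponentIn [AddCommGroup E] [Module ℝ E] [TopologicalSpace E]
    [ContinuousAdd E] [ContinuousSMul ℝ E] {S : Set E} {z v : E} {t : ℝ} (ht : 0 ≤ t)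
    (hS : ∀ s : ℝ, 0 ≤ s → z + s • v ∈ S) : z + t • v ∈ connectedComponentIn S z := by
  have hray : IsPreconnected ((fun s : ℝ => z + s • v) '' Ici 0) :=
    isPreconnected_Ici.image _ (by fun_prop)
  refine hray.subset_connectedComponentIn ⟨0, self_mem_Ici, by simp⟩ ?_ ⟨t, ht, rfl⟩
  rintro _ ⟨s, hs, rfl⟩
  exact hS s hs

variable [NormedAddCommGroup E] [NormedSpace ℝ E]

lemma not_isBounded_of_eventually_add_smul_mem {C : Set E} {z v : E} (hv : v ≠ 0)
    (hC : ∀ᶠ s : ℝ in atTop, z + s • v ∈ C) : ¬IsBounded C := by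
  intro hb
  obtain ⟨B, hB⟩ := isBounded_iff_forall_norm_le.1 hb
  obtain ⟨s, hsC, hs⟩ := (hC.and (eventually_ge_atTop ((B + ‖z‖ + 1) / ‖v‖))).exists
  have hsv : B + ‖z‖ + 1 ≤ s * ‖v‖ := (div_le_iff₀ (norm_pos_iff.2 hv)).1 hs
  have hnorm : s * ‖v‖ ≤ ‖z + s • v‖ + ‖z‖ := by
    calc s * ‖v‖ ≤ ‖s • v‖ := by rw [norm_smul]; gcongr; exact le_abs_self s
      _ = ‖(z + s • v) - z‖ := by rw [add_sub_cancel_left]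
      _ ≤ ‖z + s • v‖ + ‖z‖ := norm_sub_le _ _
  linarith [hB _ hsC]

theorem hasUniqueUnboundedComponent_of_rays {S C : Set E} {v : E} {R : ℝ} (hv : v ≠ 0)
    (hCS : C ⊆ S) (hC : IsPreconnected C) (hC_ray : ∀ z, ∀ᶠ s : ℝ in atTop, z + s • v ∈ C)
    (hS_ray : ∀ z ∈ S, R ≤ ‖z‖ → ∀ s : ℝ, 0 ≤ s → z + s • v ∈ S) :
    HasUniqueUnboundedComponent S := by
  obtain ⟨s₀, hy₀⟩ := (hC_ray 0).exists
  set y₀ := (0 : E) + s₀ • v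
  have hC_sub : C ⊆ connectedComponentIn S y₀ := hC.subset_connectedComponentIn hy₀ hCS
  have unbounded_eq : ∀ z, ¬IsBounded (connectedComponentIn S z) →
      connectedComponentIn S z = connectedComponentIn S y₀ := by
    intro z hz
    obtain ⟨z₁, hz₁, hR⟩ : ∃ z₁ ∈ connectedComponentIn S z, R ≤ ‖z₁‖ := by
      by_contra! h
      exact hz (isBounded_iff_forall_norm_le.2 ⟨R, fun x hx => (h x hx).le⟩)
    obtain ⟨t, htC, ht⟩ := ((hC_ray z₁).and (eventually_ge_atTop 0)).exists
    have hzt := add_smul_mem_connectedComponentIn ht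
      (hS_ray z₁ (connectedComponentIn_subset _ _ hz₁) hR)
    rw [connectedComponentIn_eq hz₁, connectedComponentIn_eq hzt]
    exact (connectedComponentIn_eq (hC_sub htC)).symm
  refine ⟨⟨y₀, hCS hy₀, fun hb => ?_⟩, fun z _ w _ hz hw =>
    (unbounded_eq z hz).trans (unbounded_eq w hw).symm⟩
  exact not_isBounded_of_eventually_add_smul_mem hv (hC_ray 0) (hb.subset hC_sub)

end UnboundedComponent

lemma half_norm_le_norm_sub_smul {F : Type*} [NormedAddCommGroup F] [InnerProductSpace ℝ F]
    {z v : F} {s : ℝ} (hs : 0 ≤ s) (h : 2 * inner ℝ v z ≤ ‖v‖ * ‖z‖) :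
    ‖z‖ / 2 ≤ ‖z - s • v‖ := by
  have hsq : ‖z - s • v‖ ^ 2 = ‖z‖ ^ 2 - 2 * s * inner ℝ v z + (s * ‖v‖) ^ 2 := by
    rw [norm_sub_sq_real, real_inner_smul_right, real_inner_comm, norm_smul,
      Real.norm_of_nonneg hs]
    ring
  refine (pow_le_pow_iff_left₀ (by positivity) (norm_nonneg _) two_ne_zero).1 ?_
  nlinarith [mul_le_mul_of_nonneg_left h hs, sq_nonneg (s * ‖v‖ - ‖z‖ / 2)]

lemma log_le_mul_sub_log_sub_one {x t : ℝ} (hx : 0 < x) (ht : 0 < t) :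
    Real.log x ≤ t * x - Real.log t - 1 := by
  have h := Real.log_le_sub_one_of_pos (mul_pos ht hx)
  rw [Real.log_mul ht.ne' hx.ne'] at h
  linarith

lemma log_sub_log_le_div {x y d r : ℝ} (hx : 0 < x) (hd : 0 < d) (hdy : d ≤ y)
    (hxy : |x - y| ≤ r) : Real.log x - Real.log y ≤ r / d := by
  have hy : 0 < y := hd.trans_le hdy
  have h := Real.log_le_sub_one_of_pos (div_pos hx hy)
  rw [Real.log_div hx.ne' hy.ne'] at h
  calc Real.log x - Real.log y ≤ (x - y) / y := by rwa [sub_div, div_self hy.ne']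
    _ ≤ r / y := by gcongr; exact (le_abs_self _).trans hxy
    _ ≤ r / d := by have : 0 ≤ r := (abs_nonneg _).trans hxy; gcongr

lemma ae_mem_msupp (μ : Measure ℝ) : ∀ᵐ x ∂μ, x ∈ msupp μ := by
  have h : msupp μ = μ.support := by
    rw [Measure.support_eq_forall_isOpen]
    ext x
    exact ⟨fun h U hx hU => h U hU hx, fun h U hU hx => h U hx hU⟩
  exact h ▸ Measure.support_mem_ae

lemma notMem_ofReal_image_msupp {μ : Measure ℝ} {M : ℝ} (hM : ∀ x ∈ msupp μ, |x| ≤ M) {z : ℂ}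
    (hz : M < ‖z‖) :
    z ∉ (fun x : ℝ => (x : ℂ)) '' msupp μ := by
  rintro ⟨x, hx, rfl⟩
  rw [Complex.norm_real, Real.norm_eq_abs] at hz
  exact (hM x hx).not_gt hz

lemma norm_sub_ofReal_ge {z : ℂ} {x M : ℝ} (hx : |x| ≤ M) : ‖z‖ - M ≤ ‖z - x‖ := by
  have h := norm_sub_norm_le z x
  rw [Complex.norm_real, Real.norm_eq_abs] at h
  linarith

lemma norm_sub_ofReal_le {z : ℂ} {x M : ℝ} (hx : |x| ≤ M) : ‖z - x‖ ≤ ‖z‖ + M := by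
  have h := norm_sub_le z x
  rw [Complex.norm_real, Real.norm_eq_abs] at h
  linarith

def logPotential (μ : Measure ℝ) (z : ℂ) : ℝ :=
  ∫ x, Real.log ‖z - x‖ ∂μ

section LogPotential

variable {μ : Measure ℝ} {M : ℝ} (hM : ∀ᵐ x ∂μ, |x| ≤ M)
include hM

lemma integrable_log_norm_sub_ofReal [IsFiniteMeasure μ] {z : ℂ} (hz : M < ‖z‖) :
    Integrable (fun x : ℝ => Real.log ‖z - x‖) μ := by
  refine (integrable_const (max |Real.log (‖z‖ - M)| |Real.log (‖z‖ + M)|)).mono'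
    (by fun_prop : Measurable fun x : ℝ => Real.log ‖z - x‖).aestronglyMeasurable ?_
  filter_upwards [hM] with x hx
  have hlo := norm_sub_ofReal_ge (z := z) hx
  exact abs_le_max_abs_abs (Real.log_le_log (by linarith) hlo)
    (Real.log_le_log (by linarith) (norm_sub_ofReal_le hx))

variable [IsProbabilityMeasure μ]

lemma log_sub_le_logPotential {z : ℂ} (hz : M < ‖z‖) :
    Real.log (‖z‖ - M) ≤ logPotential μ z := by
  have h := integral_mono_ae (integrable_const _) (integrable_log_norm_sub_ofReal hM hz)
    (hM.mono fun x hx => Real.log_le_log (by linarith) (norm_sub_ofReal_ge (z := z) hx))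
  simpa [logPotential] using h

lemma logPotential_le_log_add {z : ℂ} (hz : M < ‖z‖) :
    logPotential μ z ≤ Real.log (‖z‖ + M) := by
  have h := integral_mono_ae (integrable_log_norm_sub_ofReal hM hz) (integrable_const _)
    (hM.mono fun x hx => Real.log_le_log
      (by linarith [norm_sub_ofReal_ge (z := z) hx]) (norm_sub_ofReal_le hx))
  simpa [logPotential] using h

lemma logPotential_sub_logPotential_le {p q : ℂ} (hp : M < ‖p‖) (hq : M < ‖q‖) :
    logPotential μ p - logPotential μ q ≤ ‖p - q‖ / (‖q‖ - M) := by
  have hp_int := integrable_log_norm_sub_ofReal hM hp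
  have hq_int := integrable_log_norm_sub_ofReal hM hq
  have h := integral_mono_ae (hp_int.sub hq_int) (integrable_const (‖p - q‖ / (‖q‖ - M))) <|
    hM.mono fun x hx => log_sub_log_le_div (by linarith [norm_sub_ofReal_ge (z := p) hx])
      (by linarith) (norm_sub_ofReal_ge hx)
      (by simpa using abs_norm_sub_norm_le (p - x) (q - x))
  rw [integral_sub' hp_int hq_int] at h
  simpa [logPotential] using h

end LogPotential

def phi (μ : Measure ℝ) (u z : ℂ) : ℝ :=
  (z * u).re - logPotential μ z - Real.log ‖u‖

lemma re_add_smul_conj_mul (z u : ℂ) (s : ℝ) :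
    ((z + s • conj u) * u).re = (z * u).re + s * ‖u‖ ^ 2 := by
  rw [add_mul, Complex.add_re, Complex.real_smul, mul_assoc, Complex.conj_mul',
    ← Complex.ofReal_pow, ← Complex.ofReal_mul, Complex.ofReal_re]

lemma re_mul_le_norm_mul_norm (z u : ℂ) : (z * u).re ≤ ‖z‖ * ‖u‖ :=
  (Complex.re_le_norm _).trans_eq (norm_mul _ _)

lemma neg_re_mul_le_norm_mul_norm (z u : ℂ) : -(z * u).re ≤ ‖z‖ * ‖u‖ :=
  (neg_le_abs _).trans ((Complex.abs_re_le_norm _).trans_eq (norm_mul _ _))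

lemma phi_le_phi_add_smul_conj {μ : Measure ℝ} [IsProbabilityMeasure μ] {M : ℝ}
    (hM : ∀ᵐ x ∂μ, |x| ≤ M) {u q : ℂ} (hu : u ≠ 0) {s : ℝ} (hs : 0 ≤ s)
    (hq : M + ‖u‖⁻¹ ≤ ‖q‖) (hp : M < ‖q + s • conj u‖) :
    phi μ u q ≤ phi μ u (q + s • conj u) := by
  have ha : 0 < ‖u‖ := norm_pos_iff.2 hu
  have hqM : M < ‖q‖ := by linarith [inv_pos.2 ha]
  have hL := logPotential_sub_logPotential_le hM hp hqM
  rw [add_sub_cancel_left, norm_smul, Complex.norm_conj, Real.norm_of_nonneg hs] at hL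
  have hdist : 1 ≤ ‖u‖ * (‖q‖ - M) := (inv_le_iff_one_le_mul₀' ha).1 (by linarith)
  have hdiv : s * ‖u‖ / (‖q‖ - M) ≤ s * ‖u‖ ^ 2 := by
    rw [div_le_iff₀ (by linarith)]
    nlinarith [mul_nonneg hs ha.le]
  simp only [phi, re_add_smul_conj_mul]
  linarith

lemma convex_cone (u : ℂ) (K : ℝ) :
    Convex ℝ {w : ℂ | K + ‖u‖ * ‖w‖ / 2 ≤ (w * u).re} := by
  intro z hz w hw a b ha hb hab
  simp only [mem_ofPred_eq] at hz hw ⊢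
  have hre : ((a • z + b • w) * u).re = a * (z * u).re + b * (w * u).re := by
    simp only [add_mul, Complex.add_re, Complex.real_smul, mul_assoc, Complex.re_ofReal_mul]
  have hnorm : ‖a • z + b • w‖ ≤ a * ‖z‖ + b * ‖w‖ := by
    refine (norm_add_le _ _).trans_eq ?_
    rw [norm_smul, norm_smul, Real.norm_of_nonneg ha, Real.norm_of_nonneg hb]
  rw [hre]
  have hK : K = a * K + b * K := by rw [← add_mul, hab, one_mul]
  nlinarith [mul_le_mul_of_nonneg_left hz ha, mul_le_mul_of_nonneg_left hw hb,
    mul_le_mul_of_nonneg_left hnorm (norm_nonneg u)]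

lemma eventually_add_smul_conj_mem_cone {u : ℂ} (hu : u ≠ 0) (K : ℝ) (z : ℂ) :
    ∀ᶠ s : ℝ in atTop, z + s • conj u ∈ {w : ℂ | K + ‖u‖ * ‖w‖ / 2 ≤ (w * u).re} := by
  have ha : 0 < ‖u‖ := norm_pos_iff.2 hu
  filter_upwards [eventually_ge_atTop (2 * (K + ‖u‖ * ‖z‖ / 2 - (z * u).re) / ‖u‖ ^ 2),
    eventually_ge_atTop 0] with s hs hs0
  rw [div_le_iff₀ (by positivity)] at hs
  have hnorm : ‖z + s • conj u‖ ≤ ‖z‖ + s * ‖u‖ := by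
    refine (norm_add_le _ _).trans_eq ?_
    rw [norm_smul, Complex.norm_conj, Real.norm_of_nonneg hs0]
  show _ ≤ _
  rw [re_add_smul_conj_mul]
  nlinarith [mul_le_mul_of_nonneg_left hnorm ha.le]

lemma convex_halfPlane (u : ℂ) (K : ℝ) : Convex ℝ {w : ℂ | (w * u).re ≤ K} :=
  convex_halfSpace_le ⟨fun z w => by rw [add_mul, Complex.add_re],
    fun r z => by rw [Complex.real_smul, mul_assoc, Complex.re_ofReal_mul, smul_eq_mul]⟩ K

lemma eventually_add_smul_neg_conj_mem_halfPlane {u : ℂ} (hu : u ≠ 0) (K : ℝ) (z : ℂ) :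
    ∀ᶠ s : ℝ in atTop, z + s • -conj u ∈ {w : ℂ | (w * u).re ≤ K} := by
  have ha : 0 < ‖u‖ := norm_pos_iff.2 hu
  filter_upwards [eventually_ge_atTop (((z * u).re - K) / ‖u‖ ^ 2)] with s hs
  rw [div_le_iff₀ (by positivity)] at hs
  show _ ≤ _
  rw [smul_neg, ← neg_smul, re_add_smul_conj_mul]
  linarith

section LevelSets

variable {μ : Measure ℝ} [IsProbabilityMeasure μ] {M : ℝ} (hM : ∀ x ∈ msupp μ, |x| ≤ M)
  {u : ℂ} (c : ℝ)
include hM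

lemma lt_re_mul_of_lt_phi {z : ℂ} (hz : M + Real.exp (M * ‖u‖ - c - Real.log ‖u‖) ≤ ‖z‖)
    (hc : c < phi μ u z) : M * ‖u‖ < (z * u).re := by
  have hexp := Real.exp_pos (M * ‖u‖ - c - Real.log ‖u‖)
  have hL := log_sub_le_logPotential ((ae_mem_msupp μ).mono hM) (z := z) (by linarith)
  have hlog : M * ‖u‖ - c - Real.log ‖u‖ ≤ Real.log (‖z‖ - M) :=
    (Real.le_log_iff_exp_le (by linarith)).2 (by linarith)
  simp only [phi] at hc
  linarith

lemma superlevel_add_smul_conj_mem (hu : u ≠ 0) {z : ℂ}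
    (hz : z ∈ {z | z ∉ (fun x : ℝ => (x : ℂ)) '' msupp μ ∧ c < phi μ u z})
    (hR : M + Real.exp (M * ‖u‖ - c - Real.log ‖u‖) + ‖u‖⁻¹ ≤ ‖z‖) {s : ℝ} (hs : 0 ≤ s) :
    z + s • conj u ∈ {z | z ∉ (fun x : ℝ => (x : ℂ)) '' msupp μ ∧ c < phi μ u z} := by
  have ha : 0 < ‖u‖ := norm_pos_iff.2 hu
  have hre := lt_re_mul_of_lt_phi hM c (by linarith [inv_pos.2 ha]) hz.2
  have hnorm : M < ‖z + s • conj u‖ := by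
    refine lt_of_mul_lt_mul_right ?_ ha.le
    nlinarith [re_mul_le_norm_mul_norm (z + s • conj u) u, re_add_smul_conj_mul z u s,
      mul_nonneg hs (sq_nonneg ‖u‖)]
  refine ⟨notMem_ofReal_image_msupp hM hnorm, hz.2.trans_le ?_⟩
  exact phi_le_phi_add_smul_conj ((ae_mem_msupp μ).mono hM) hu hs
    (by linarith [Real.exp_pos (M * ‖u‖ - c - Real.log ‖u‖)]) hnorm

lemma cone_subset_superlevel (hM0 : 0 ≤ M) (hu : u ≠ 0) :
    {z : ℂ | ‖u‖ * M / 2 + |c| + 1 + ‖u‖ * ‖z‖ / 2 ≤ (z * u).re} ⊆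
      {z | z ∉ (fun x : ℝ => (x : ℂ)) '' msupp μ ∧ c < phi μ u z} := by
  intro z (hz : _ ≤ (z * u).re)
  have ha : 0 < ‖u‖ := norm_pos_iff.2 hu
  have hzM : M < ‖z‖ := by
    refine lt_of_mul_lt_mul_left ?_ ha.le
    nlinarith [re_mul_le_norm_mul_norm z u, abs_nonneg c]
  have hL := logPotential_le_log_add ((ae_mem_msupp μ).mono hM) hzM
  have hlog := log_le_mul_sub_log_sub_one (x := ‖z‖ + M) (by linarith) (half_pos ha)
  have hlog2 := Real.log_le_sub_one_of_pos two_pos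
  rw [Real.log_div ha.ne' two_ne_zero] at hlog
  refine ⟨notMem_ofReal_image_msupp hM hzM, ?_⟩
  simp only [phi]
  nlinarith [le_abs_self c]

lemma halfPlane_subset_sublevel (hM0 : 0 ≤ M) (hu : u ≠ 0) :
    {z : ℂ | (z * u).re ≤ -((M + 1) * ‖u‖ + |c| + |Real.log ‖u‖|)} ⊆
      {z | z ∉ (fun x : ℝ => (x : ℂ)) '' msupp μ ∧ phi μ u z < c} := by
  intro z (hz : (z * u).re ≤ _)
  have ha : 0 < ‖u‖ := norm_pos_iff.2 hu
  have hzM : M + 1 ≤ ‖z‖ := by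
    refine le_of_mul_le_mul_right ?_ ha
    linarith [neg_re_mul_le_norm_mul_norm z u, abs_nonneg c, abs_nonneg (Real.log ‖u‖)]
  have hL := log_sub_le_logPotential ((ae_mem_msupp μ).mono hM) (z := z) (by linarith)
  have hlog : 0 ≤ Real.log (‖z‖ - M) := Real.log_nonneg (by linarith)
  refine ⟨notMem_ofReal_image_msupp hM (by linarith), ?_⟩
  simp only [phi]
  nlinarith [neg_abs_le c, neg_abs_le (Real.log ‖u‖), mul_pos (by linarith : 0 < M + 1) ha]

lemma two_mul_re_mul_le_of_phi_lt (hM0 : 0 ≤ M) (hu : u ≠ 0) {z : ℂ}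
    (hz : 2 * M + 4 * (|c| + 2) / ‖u‖ ≤ ‖z‖) (hc : phi μ u z < c) :
    2 * (z * u).re ≤ ‖u‖ * ‖z‖ := by
  have ha : 0 < ‖u‖ := norm_pos_iff.2 hu
  have hcz : 4 * (|c| + 2) ≤ ‖u‖ * (‖z‖ - 2 * M) := by
    rw [← div_le_iff₀' ha]
    linarith
  have hzM : M < ‖z‖ := by nlinarith [abs_nonneg c]
  have hL := logPotential_le_log_add ((ae_mem_msupp μ).mono hM) hzM
  have hlog := log_le_mul_sub_log_sub_one (x := ‖z‖ + M) (by linarith) (div_pos ha four_pos)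
  have hlog4 := Real.log_le_sub_one_of_pos four_pos
  rw [Real.log_div ha.ne' four_ne_zero] at hlog
  simp only [phi] at hc
  nlinarith [le_abs_self c, mul_nonneg ha.le hM0]

lemma sublevel_add_smul_neg_conj_mem (hM0 : 0 ≤ M) (hu : u ≠ 0) {z : ℂ}
    (hz : z ∈ {z | z ∉ (fun x : ℝ => (x : ℂ)) '' msupp μ ∧ phi μ u z < c})
    (hR : 2 * M + 4 * (|c| + 2) / ‖u‖ ≤ ‖z‖) {s : ℝ} (hs : 0 ≤ s) :
    z + s • -conj u ∈ {z | z ∉ (fun x : ℝ => (x : ℂ)) '' msupp μ ∧ phi μ u z < c} := by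
  have ha : 0 < ‖u‖ := norm_pos_iff.2 hu
  have hzM : M < ‖z‖ := by
    have : 0 < 4 * (|c| + 2) / ‖u‖ := by positivity
    linarith
  have hinner : 2 * inner ℝ (conj u) z ≤ ‖conj u‖ * ‖z‖ := by
    rw [Complex.inner, Complex.conj_conj, Complex.norm_conj]
    exact two_mul_re_mul_le_of_phi_lt hM c hM0 hu hR hz.2
  have hhalf := half_norm_le_norm_sub_smul hs hinner
  have hfar : ‖u‖⁻¹ ≤ 2 * (|c| + 2) / ‖u‖ := by
    rw [inv_eq_one_div]
    gcongr
    linarith [abs_nonneg c]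
  have hfour : 4 * (|c| + 2) / ‖u‖ = 2 * (2 * (|c| + 2) / ‖u‖) := by ring
  have hq : M + ‖u‖⁻¹ ≤ ‖z - s • conj u‖ := by linarith [inv_pos.2 ha]
  rw [smul_neg, ← sub_eq_add_neg]
  refine ⟨notMem_ofReal_image_msupp hM (by linarith [inv_pos.2 ha]), lt_of_le_of_lt ?_ hz.2⟩
  simpa using phi_le_phi_add_smul_conj ((ae_mem_msupp μ).mono hM) hu hs hq
    (by simpa using hzM)

theorem hasUniqueUnboundedComponent_superlevel (hM0 : 0 ≤ M) (hu : u ≠ 0) :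
    HasUniqueUnboundedComponent
      {z | z ∉ (fun x : ℝ => (x : ℂ)) '' msupp μ ∧ c < phi μ u z} :=
  hasUniqueUnboundedComponent_of_rays (by simpa using hu) (cone_subset_superlevel hM c hM0 hu)
    (convex_cone u _).isPreconnected (eventually_add_smul_conj_mem_cone hu _)
    (fun _ hz hR _ hs => superlevel_add_smul_conj_mem hM c hu hz hR hs)

theorem hasUniqueUnboundedComponent_sublevel (hM0 : 0 ≤ M) (hu : u ≠ 0) :
    HasUniqueUnboundedComponent
      {z | z ∉ (fun x : ℝ => (x : ℂ)) '' msupp μ ∧ phi μ u z < c} :=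
  hasUniqueUnboundedComponent_of_rays (by simpa using hu) (halfPlane_subset_sublevel hM c hM0 hu)
    (convex_halfPlane u _).isPreconnected (eventually_add_smul_neg_conj_mem_halfPlane hu _)
    (fun _ hz hR _ hs => sublevel_add_smul_neg_conj_mem hM c hM0 hu hz hR hs)

end LevelSets

theorem statement12_general (μ : Measure ℝ) [IsProbabilityMeasure μ]
    (hcompact : IsCompact (msupp μ))
    (z₀ : ℂ)
    (hu : (∫ x, (z₀ - (x : ℂ))⁻¹ ∂μ) ≠ 0) (c : ℝ) :
    let u : ℂ := ∫ x, (z₀ - (x : ℂ))⁻¹ ∂μ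
    let Φ : ℂ → ℝ := fun z =>
      (z * u).re - (∫ x, Real.log (‖z - (x : ℂ)‖) ∂μ) -
        Real.log (‖u‖)
    let Sp : Set ℂ := {z | z ∉ (fun x : ℝ => (x : ℂ)) '' msupp μ ∧ c < Φ z}
    let Sm : Set ℂ := {z | z ∉ (fun x : ℝ => (x : ℂ)) '' msupp μ ∧ Φ z < c}
    ((∃ z ∈ Sp, ¬ Bornology.IsBounded (connectedComponentIn Sp z)) ∧
        ∀ z ∈ Sp, ∀ w ∈ Sp,
          ¬ Bornology.IsBounded (connectedComponentIn Sp z) →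
          ¬ Bornology.IsBounded (connectedComponentIn Sp w) →
          connectedComponentIn Sp z = connectedComponentIn Sp w) ∧
      ((∃ z ∈ Sm, ¬ Bornology.IsBounded (connectedComponentIn Sm z)) ∧
        ∀ z ∈ Sm, ∀ w ∈ Sm,
          ¬ Bornology.IsBounded (connectedComponentIn Sm z) →
          ¬ Bornology.IsBounded (connectedComponentIn Sm w) →
          connectedComponentIn Sm z = connectedComponentIn Sm w) := by
  intro u Φ Sp Sm
  obtain ⟨M, hM0, hM⟩ : ∃ M, 0 ≤ M ∧ ∀ x ∈ msupp μ, |x| ≤ M := by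
    obtain ⟨C, hC⟩ := isBounded_iff_forall_norm_le.1 hcompact.isBounded
    exact ⟨max C 0, le_max_right _ _, fun x hx => (hC x hx).trans (le_max_left _ _)⟩
  exact ⟨hasUniqueUnboundedComponent_superlevel hM c hM0 hu,
    hasUniqueUnboundedComponent_sublevel hM c hM0 hu⟩

/-- For a compactly supported probability measure `μ` on `ℝ`,
`z₀ ∉ supp μ` (viewed in `ℂ`) with `u := G_μ(z₀) ≠ 0`, and any `c ∈ ℝ`, each of the sets
`{z ∉ supp μ : Φ(z) > c}` and `{z ∉ supp μ : Φ(z) < c}` has exactly one unbounded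
connected component, where `Φ(z) = Re(z u) − ∫ log|z − x| dμ(x) − log|u|`. -/
theorem statement12 (μ : Measure ℝ) [IsProbabilityMeasure μ]
    (hcompact : IsCompact (msupp μ))
    (z₀ : ℂ) (hz₀ : z₀ ∉ (fun x : ℝ => (x : ℂ)) '' msupp μ)
    (hu : (∫ x, (z₀ - (x : ℂ))⁻¹ ∂μ) ≠ 0) (c : ℝ) :
    let u : ℂ := ∫ x, (z₀ - (x : ℂ))⁻¹ ∂μ
    let Φ : ℂ → ℝ := fun z =>
      (z * u).re - (∫ x, Real.log (‖z - (x : ℂ)‖) ∂μ) -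
        Real.log (‖u‖)
    let Sp : Set ℂ := {z | z ∉ (fun x : ℝ => (x : ℂ)) '' msupp μ ∧ c < Φ z}
    let Sm : Set ℂ := {z | z ∉ (fun x : ℝ => (x : ℂ)) '' msupp μ ∧ Φ z < c}
    ((∃ z ∈ Sp, ¬ Bornology.IsBounded (connectedComponentIn Sp z)) ∧
        ∀ z ∈ Sp, ∀ w ∈ Sp,
          ¬ Bornology.IsBounded (connectedComponentIn Sp z) →
          ¬ Bornology.IsBounded (connectedComponentIn Sp w) →
          connectedComponentIn Sp z = connectedComponentIn Sp w) ∧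
      ((∃ z ∈ Sm, ¬ Bornology.IsBounded (connectedComponentIn Sm z)) ∧
        ∀ z ∈ Sm, ∀ w ∈ Sm,
          ¬ Bornology.IsBounded (connectedComponentIn Sm z) →
          ¬ Bornology.IsBounded (connectedComponentIn Sm w) →
          connectedComponentIn Sm z = connectedComponentIn Sm w) :=
  statement12_general μ hcompact z₀ hu c
end
end

section
/- Let μ be a Borel probability measure on ℝ with compact support, not a single point mass, let E₋ and E₊ denote the infimum and supremum of supp μ, and set x₀ := E₊ + 4(E₊ − E₋). Write G(z) := ∫ (z − x)^{−1} dμ(x) and G′(z) := −∫ (z − x)^{−2} dμ(x) for real z > E₊. The quantity 1 + G(x₀)²/G′(x₀) lies in (0, 1); set τ := (1 + G(x₀)²/G′(x₀))^{−1}. Then for every natural number n with n ≥ τ: there exists a unique ξ ∈ (E₊, ∞) such that n·G(ξ)² + (n − 1)·G′(ξ) = 0; moreover ξ ≥ x₀ (equivalently ξ − E₊ ≥ 4(E₊ − E₋)), n·G(z)² + (n − 1)·G′(z) < 0 for all z ∈ (E₊, ξ), and n·G(z)² + (n − 1)·G′(z) > 0 for all z ∈ (ξ, ∞). -/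
/-!
Write `m_k(z) = ∫ (z - x)⁻ᵏ dμ(x)` for `z > E₊`, so that `G = m₁`, `G' = -m₂` and, with
`r = m₁² / m₂`, `n G² + (n - 1) G' = n m₂ (r - (1 - 1/n))`. Cauchy–Schwarz for the weights
`(z - x)⁻ᵏ` gives `m_{k+1}² < m_k m_{k+2}`, strictly because `μ` is not a point mass. For `k = 0`
this is `r < 1`; for `k = 1` it makes `r' = 2 m₁ (m₁ m₃ - m₂²) / m₂²` positive, so `r` is strictly
increasing on `(E₊, ∞)`. Squeezed between `((z - E₊) / (z - E₋))²` and `1`, `r` tends to `1` at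
infinity, while `n ≥ τ` says exactly `r(x₀) ≤ 1 - 1/n`. The intermediate value theorem on `[x₀, ∞)`
produces `ξ` with `r(ξ) = 1 - 1/n`, and monotonicity of `r` gives uniqueness and the signs.
-/

open MeasureTheory Filter Topology

noncomputable section

open Set

lemma msupp_eq_support (μ : Measure ℝ) : msupp μ = μ.support := by
  rw [Measure.support_eq_forall_isOpen]
  ext x
  exact ⟨fun h U hxU hU => h U hU hxU, fun h U hU hxU => h U hxU hU⟩

lemma ae_mem_Icc_sInf_sSup_msupp {μ : Measure ℝ} (hμ : IsCompact (msupp μ)) :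
    ∀ᵐ x ∂μ, x ∈ Icc (sInf (msupp μ)) (sSup (msupp μ)) := by
  filter_upwards [msupp_eq_support μ ▸ Measure.support_mem_ae] with x hx
  exact ⟨csInf_le hμ.bddBelow hx, le_csSup hμ.bddAbove hx⟩

lemma MeasureTheory.Measure.eq_dirac_of_ae_eq_const {α : Type*} [MeasurableSpace α] {μ : Measure α}
    [IsProbabilityMeasure μ] {c : α} (h : ∀ᵐ x ∂μ, x = c) : μ = Measure.dirac c :=
  calc μ = μ.map id := Measure.map_id.symm
    _ = μ.map fun _ => c := Measure.map_congr h
    _ = Measure.dirac c := by simp [Measure.map_const]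

lemma lt_of_ae_mem_Icc {α : Type*} [MeasurableSpace α] [LinearOrder α] {μ : Measure α}
    [IsProbabilityMeasure μ] (hμ : ∀ c, μ ≠ Measure.dirac c) {a b : α}
    (h : ∀ᵐ x ∂μ, x ∈ Icc a b) : a < b := by
  by_contra! hba
  refine hμ b (Measure.eq_dirac_of_ae_eq_const ?_)
  filter_upwards [h] with x hx using le_antisymm hx.2 (hba.trans hx.1)

lemma integral_pos_of_ae_pos {α : Type*} [MeasurableSpace α] {μ : Measure α} [NeZero μ]
    {f : α → ℝ} (hf : ∀ᵐ x ∂μ, 0 < f x) (hfi : Integrable f μ) : 0 < ∫ x, f x ∂μ := by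
  rw [integral_pos_iff_support_of_nonneg_ae (hf.mono fun _ hx => hx.le) hfi, pos_iff_ne_zero]
  intro h0
  have hfalse : ∀ᵐ x ∂μ, False := by
    filter_upwards [hf, measure_eq_zero_iff_ae_notMem.mp h0] with x hpos hzero
    exact hzero hpos.ne'
  exact NeZero.ne μ (ae_eq_bot.mp (eventually_false_iff_eq_bot.mp hfalse))

theorem sq_integral_mul_lt_integral_mul_integral_mul_sq {α : Type*} [MeasurableSpace α]
    {μ : Measure α} {w g : α → ℝ} (hw : ∀ᵐ x ∂μ, 0 < w x) (hwi : Integrable w μ)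
    (hwg : Integrable (fun x => w x * g x) μ) (hwg2 : Integrable (fun x => w x * g x ^ 2) μ)
    (hg : ∀ c, ¬ g =ᵐ[μ] fun _ => c) :
    (∫ x, w x * g x ∂μ) ^ 2 < (∫ x, w x ∂μ) * ∫ x, w x * g x ^ 2 ∂μ := by
  set W := ∫ x, w x ∂μ
  set A := ∫ x, w x * g x ∂μ
  set S := ∫ x, w x * g x ^ 2 ∂μ
  have hμ : NeZero μ := ⟨fun h => hg 0 (by rw [h, ae_zero]; exact eventually_bot)⟩
  have hW : 0 < W := integral_pos_of_ae_pos hw hwi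
  -- `∫ w (W g - A)² = W (W S - A²)`, and the left side is positive as `g` is not a.e. `A / W`.
  have hexpand : (fun x => w x * (W * g x - A) ^ 2)
      = fun x => W ^ 2 * (w x * g x ^ 2) - 2 * W * A * (w x * g x) + A ^ 2 * w x := by
    ext x; ring
  have hint : Integrable (fun x => w x * (W * g x - A) ^ 2) μ := by
    rw [hexpand]
    exact ((hwg2.const_mul _).sub (hwg.const_mul _)).add (hwi.const_mul _)
  have hvalue : ∫ x, w x * (W * g x - A) ^ 2 ∂μ = W * (W * S - A ^ 2) := by
    rw [hexpand, integral_add, integral_sub, integral_const_mul, integral_const_mul,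
      integral_const_mul]
    · ring
    all_goals fun_prop
  have hnonneg : 0 ≤ᵐ[μ] fun x => w x * (W * g x - A) ^ 2 := by
    filter_upwards [hw] with x hx using by positivity
  have hpos : 0 < ∫ x, w x * (W * g x - A) ^ 2 ∂μ := by
    refine (integral_nonneg_of_ae hnonneg).lt_of_ne fun h0 => hg (A / W) ?_
    filter_upwards [(integral_eq_zero_iff_of_nonneg_ae hnonneg hint).mp h0.symm, hw]
      with x hx hwx
    rw [Pi.zero_apply, mul_eq_zero, or_iff_right hwx.ne', sq_eq_zero_iff, sub_eq_zero] at hx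
    field_simp
    linarith
  rw [hvalue] at hpos
  nlinarith [pos_of_mul_pos_right hpos hW.le]

lemma inv_pow_le_inv_pow_left₀ {K : Type*} [Semifield K] [LinearOrder K] [IsStrictOrderedRing K]
    {a b : K} (ha : 0 < a) (hab : a ≤ b) (k : ℕ) : (b ^ k)⁻¹ ≤ (a ^ k)⁻¹ :=
  inv_anti₀ (pow_pos ha k) (pow_le_pow_left₀ ha.le hab k)

lemma inv_sub_not_ae_eq_const {μ : Measure ℝ} [IsProbabilityMeasure μ]
    (hμ : ∀ c, μ ≠ Measure.dirac c) (z c : ℝ) : ¬ (fun x => (z - x)⁻¹) =ᵐ[μ] fun _ => c := by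
  intro h
  refine hμ (z - c⁻¹) (Measure.eq_dirac_of_ae_eq_const ?_)
  filter_upwards [h] with x hx
  rw [← hx, inv_inv]
  ring

lemma hasDerivAt_inv_sub_pow (k : ℕ) {x y : ℝ} (h : y ≠ x) :
    HasDerivAt (fun y => ((y - x) ^ k)⁻¹) (-(k * ((y - x) ^ (k + 1))⁻¹)) y := by
  have hyx : y - x ≠ 0 := sub_ne_zero.mpr h
  refine ((((hasDerivAt_id' y).sub_const x).fun_pow k).fun_inv
    (pow_ne_zero k hyx)).congr_deriv ?_
  rcases k with _ | k
  · simp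
  · rw [add_tsub_cancel_right]
    field_simp
    ring

/-- In the notation of the statement, `G = cauchyMoment μ 1` and `G' = -cauchyMoment μ 2`. -/
def cauchyMoment (μ : Measure ℝ) (k : ℕ) (z : ℝ) : ℝ := ∫ x, ((z - x) ^ k)⁻¹ ∂μ

section CauchyMoment

variable {μ : Measure ℝ} {a b z : ℝ}

lemma integrable_inv_sub_pow [IsFiniteMeasure μ] (hb : ∀ᵐ x ∂μ, x ≤ b) (hz : b < z) (k : ℕ) :
    Integrable (fun x => ((z - x) ^ k)⁻¹) μ := by
  refine (integrable_const ((z - b) ^ k)⁻¹).mono' (by fun_prop) ?_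
  filter_upwards [hb] with x hx
  have hzx : 0 < z - x := by linarith
  rw [Real.norm_of_nonneg (by positivity)]
  exact inv_pow_le_inv_pow_left₀ (sub_pos.2 hz) (by linarith) k

lemma cauchyMoment_pos [IsFiniteMeasure μ] [NeZero μ] (hb : ∀ᵐ x ∂μ, x ≤ b) (hz : b < z)
    (k : ℕ) : 0 < cauchyMoment μ k z := by
  refine integral_pos_of_ae_pos ?_ (integrable_inv_sub_pow hb hz k)
  filter_upwards [hb] with x hx
  have : 0 < z - x := by linarith
  positivity

lemma cauchyMoment_le [IsProbabilityMeasure μ] (hb : ∀ᵐ x ∂μ, x ≤ b) (hz : b < z) (k : ℕ) :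
    cauchyMoment μ k z ≤ ((z - b) ^ k)⁻¹ :=
  calc cauchyMoment μ k z ≤ ∫ _, ((z - b) ^ k)⁻¹ ∂μ := by
        refine integral_mono_ae (integrable_inv_sub_pow hb hz k) (integrable_const _) ?_
        filter_upwards [hb] with x hx
        exact inv_pow_le_inv_pow_left₀ (sub_pos.2 hz) (by linarith) k
    _ = ((z - b) ^ k)⁻¹ := by simp

lemma inv_le_cauchyMoment [IsProbabilityMeasure μ] (hab : ∀ᵐ x ∂μ, x ∈ Icc a b) (hz : b < z)
    (k : ℕ) : ((z - a) ^ k)⁻¹ ≤ cauchyMoment μ k z :=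
  calc ((z - a) ^ k)⁻¹ = ∫ _, ((z - a) ^ k)⁻¹ ∂μ := by simp
    _ ≤ cauchyMoment μ k z := by
        refine integral_mono_ae (integrable_const _)
          (integrable_inv_sub_pow (hab.mono fun _ hx => hx.2) hz k) ?_
        filter_upwards [hab] with x ⟨hax, hxb⟩
        exact inv_pow_le_inv_pow_left₀ (by linarith) (by linarith) k

lemma hasDerivAt_cauchyMoment [IsFiniteMeasure μ] (hb : ∀ᵐ x ∂μ, x ≤ b) (hz : b < z) (k : ℕ) :
    HasDerivAt (cauchyMoment μ k) (-(k * cauchyMoment μ (k + 1) z)) z := by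
  set ε := (z - b) / 2
  have hε : 0 < ε := by simp only [ε]; linarith
  have hball : ∀ x ≤ b, ∀ y ∈ Metric.ball z ε, ε ≤ y - x := fun x hx y hy => by
    rw [Metric.mem_ball, Real.dist_eq, abs_lt] at hy
    simp only [ε] at hy ⊢
    linarith
  have hdiff := hasDerivAt_integral_of_dominated_loc_of_deriv_le (μ := μ)
    (F := fun y x => ((y - x) ^ k)⁻¹) (F' := fun y x => -(k * ((y - x) ^ (k + 1))⁻¹))
    (bound := fun _ => k * (ε ^ (k + 1))⁻¹) (Metric.ball_mem_nhds z hε)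
    (Eventually.of_forall fun _ => by fun_prop) (integrable_inv_sub_pow hb hz k) (by fun_prop)
    (by
      filter_upwards [hb] with x hx y hy
      have hyx := hball x hx y hy
      have hyx' : 0 < y - x := hε.trans_le hyx
      rw [norm_neg, Real.norm_of_nonneg (by positivity)]
      exact mul_le_mul_of_nonneg_left (inv_pow_le_inv_pow_left₀ hε hyx _) k.cast_nonneg)
    (integrable_const _)
    (by
      filter_upwards [hb] with x hx y hy
      exact hasDerivAt_inv_sub_pow k (by linarith [hball x hx y hy]))
  rw [integral_neg, integral_const_mul] at hdiff
  exact hdiff.2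

lemma sq_cauchyMoment_succ_lt_mul [IsProbabilityMeasure μ] (hμ : ∀ c, μ ≠ Measure.dirac c)
    (hb : ∀ᵐ x ∂μ, x ≤ b) (hz : b < z) (k : ℕ) :
    cauchyMoment μ (k + 1) z ^ 2 < cauchyMoment μ k z * cauchyMoment μ (k + 2) z := by
  have hw : ∀ᵐ x ∂μ, 0 < ((z - x) ^ k)⁻¹ := by
    filter_upwards [hb] with x hx
    have : 0 < z - x := by linarith
    positivity
  have h1 (x : ℝ) : ((z - x) ^ k)⁻¹ * (z - x)⁻¹ = ((z - x) ^ (k + 1))⁻¹ := by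
    rw [pow_succ, mul_inv]
  have h2 (x : ℝ) : ((z - x) ^ k)⁻¹ * (z - x)⁻¹ ^ 2 = ((z - x) ^ (k + 2))⁻¹ := by
    rw [pow_add, mul_inv, inv_pow]
  have := sq_integral_mul_lt_integral_mul_integral_mul_sq hw (integrable_inv_sub_pow hb hz k)
    (by simpa only [h1] using integrable_inv_sub_pow hb hz (k + 1))
    (by simpa only [h2] using integrable_inv_sub_pow hb hz (k + 2))
    (inv_sub_not_ae_eq_const hμ z)
  simpa only [h1, h2, cauchyMoment] using this

end CauchyMoment

lemma tendsto_sub_div_sub_atTop (a b : ℝ) :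
    Tendsto (fun z => (z - b) / (z - a)) atTop (𝓝 1) := by
  have hsub : Tendsto (fun z : ℝ => z - a) atTop atTop := by
    simpa only [sub_eq_add_neg, id] using tendsto_atTop_add_const_right atTop (-a) tendsto_id
  have h : Tendsto (fun z => 1 - (b - a) / (z - a)) atTop (𝓝 (1 - 0)) :=
    tendsto_const_nhds.sub (tendsto_const_nhds.div_atTop hsub)
  rw [sub_zero] at h
  refine h.congr' ?_
  filter_upwards [eventually_gt_atTop a] with z hz
  field_simp
  ring

/-- `G² / (-G')`, so that `1 + G² / G' = 1 - cauchyRatio μ`. -/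
def cauchyRatio (μ : Measure ℝ) (z : ℝ) : ℝ := cauchyMoment μ 1 z ^ 2 / cauchyMoment μ 2 z

lemma mul_sq_cauchyMoment_sub_eq {μ : Measure ℝ} {n z : ℝ} (hn : n ≠ 0)
    (hm : cauchyMoment μ 2 z ≠ 0) :
    n * cauchyMoment μ 1 z ^ 2 + (n - 1) * -cauchyMoment μ 2 z
      = n * cauchyMoment μ 2 z * (cauchyRatio μ z - (1 - n⁻¹)) := by
  rw [cauchyRatio]
  field_simp
  ring

section CauchyRatio

variable {μ : Measure ℝ} [IsProbabilityMeasure μ] {a b z : ℝ}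

lemma cauchyRatio_pos (hb : ∀ᵐ x ∂μ, x ≤ b) (hz : b < z) : 0 < cauchyRatio μ z :=
  div_pos (pow_pos (cauchyMoment_pos hb hz 1) 2) (cauchyMoment_pos hb hz 2)

lemma cauchyRatio_lt_one (hμ : ∀ c, μ ≠ Measure.dirac c) (hb : ∀ᵐ x ∂μ, x ≤ b) (hz : b < z) :
    cauchyRatio μ z < 1 := by
  have := sq_cauchyMoment_succ_lt_mul hμ hb hz 0
  rw [show cauchyMoment μ 0 z = 1 by simp [cauchyMoment], one_mul] at this
  exact (div_lt_one (cauchyMoment_pos hb hz 2)).mpr this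

lemma hasDerivAt_cauchyRatio (hb : ∀ᵐ x ∂μ, x ≤ b) (hz : b < z) :
    HasDerivAt (cauchyRatio μ) (2 * cauchyMoment μ 1 z *
      (cauchyMoment μ 1 z * cauchyMoment μ 3 z - cauchyMoment μ 2 z ^ 2) /
        cauchyMoment μ 2 z ^ 2) z := by
  refine (((hasDerivAt_cauchyMoment hb hz 1).fun_pow 2).div (hasDerivAt_cauchyMoment hb hz 2)
    (cauchyMoment_pos hb hz 2).ne').congr_deriv ?_
  push_cast
  ring

lemma continuousOn_cauchyRatio (hb : ∀ᵐ x ∂μ, x ≤ b) : ContinuousOn (cauchyRatio μ) (Ioi b) :=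
  fun _ hz => (hasDerivAt_cauchyRatio hb hz).continuousAt.continuousWithinAt

lemma strictMonoOn_cauchyRatio (hμ : ∀ c, μ ≠ Measure.dirac c) (hb : ∀ᵐ x ∂μ, x ≤ b) :
    StrictMonoOn (cauchyRatio μ) (Ioi b) := by
  refine strictMonoOn_of_deriv_pos (convex_Ioi b) (continuousOn_cauchyRatio hb) fun z hz => ?_
  rw [interior_Ioi] at hz
  rw [(hasDerivAt_cauchyRatio hb hz).deriv]
  have hlogconvex := sq_cauchyMoment_succ_lt_mul hμ hb hz 1
  have hm₁ := cauchyMoment_pos hb hz 1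
  have hm₂ := cauchyMoment_pos hb hz 2
  exact div_pos (by nlinarith) (by positivity)

lemma sq_sub_div_sub_le_cauchyRatio (hab : ∀ᵐ x ∂μ, x ∈ Icc a b) (hz : b < z) :
    ((z - b) / (z - a)) ^ 2 ≤ cauchyRatio μ z := by
  have hb : ∀ᵐ x ∂μ, x ≤ b := hab.mono fun _ hx => hx.2
  obtain ⟨x, hax, hxb⟩ := hab.exists
  have hza : 0 < z - a := by linarith
  calc ((z - b) / (z - a)) ^ 2 = ((z - a) ^ 1)⁻¹ ^ 2 / ((z - b) ^ 2)⁻¹ := by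
        field_simp
    _ ≤ cauchyMoment μ 1 z ^ 2 / cauchyMoment μ 2 z :=
        div_le_div₀ (sq_nonneg _)
          (pow_le_pow_left₀ (by positivity) (inv_le_cauchyMoment hab hz 1) 2)
          (cauchyMoment_pos hb hz 2) (cauchyMoment_le hb hz 2)

lemma tendsto_cauchyRatio_atTop (hμ : ∀ c, μ ≠ Measure.dirac c) (hab : ∀ᵐ x ∂μ, x ∈ Icc a b) :
    Tendsto (cauchyRatio μ) atTop (𝓝 1) := by
  have hb : ∀ᵐ x ∂μ, x ≤ b := hab.mono fun _ hx => hx.2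
  have hlower := (tendsto_sub_div_sub_atTop a b).pow 2
  rw [one_pow] at hlower
  refine tendsto_of_tendsto_of_tendsto_of_le_of_le' hlower tendsto_const_nhds ?_ ?_
  · filter_upwards [eventually_gt_atTop b] with z hz using sq_sub_div_sub_le_cauchyRatio hab hz
  · filter_upwards [eventually_gt_atTop b] with z hz using (cauchyRatio_lt_one hμ hb hz).le

lemma exists_ge_cauchyRatio_eq (hμ : ∀ c, μ ≠ Measure.dirac c) (hab : ∀ᵐ x ∂μ, x ∈ Icc a b)
    {x₀ v : ℝ} (hx₀ : b < x₀) (hv₀ : cauchyRatio μ x₀ ≤ v) (hv : v < 1) :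
    ∃ ξ, x₀ ≤ ξ ∧ cauchyRatio μ ξ = v :=
  isPreconnected_Ici.intermediate_value_Ico self_mem_Ici (le_principal_iff.2 (Ici_mem_atTop x₀))
    ((continuousOn_cauchyRatio (hab.mono fun _ hx => hx.2)).mono (Ici_subset_Ioi.2 hx₀))
    (tendsto_cauchyRatio_atTop hμ hab) ⟨hv₀, hv⟩

end CauchyRatio

/-- Let `μ` be a compactly supported probability measure on `ℝ`, not a
point mass, `x₀ := E₊ + 4(E₊ − E₋)`, `G(z) := ∫ (z−x)⁻¹ dμ`, `G′(z) := −∫ (z−x)⁻² dμ`.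
Then `1 + G(x₀)²/G′(x₀) ∈ (0,1)`, and for every `n ∈ ℕ` with
`n ≥ τ := (1 + G(x₀)²/G′(x₀))⁻¹` there is a unique `ξ ∈ (E₊, ∞)` with
`n G(ξ)² + (n−1) G′(ξ) = 0`; moreover `ξ ≥ x₀`, the quantity `n G² + (n−1) G′` is
negative on `(E₊, ξ)` and positive on `(ξ, ∞)`. -/
theorem statement15 (μ : Measure ℝ) [IsProbabilityMeasure μ]
    (hcompact : IsCompact (msupp μ))
    (hnotdirac : ∀ a : ℝ, μ ≠ Measure.dirac a) :
    let Em : ℝ := sInf (msupp μ)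
    let Ep : ℝ := sSup (msupp μ)
    let x₀ : ℝ := Ep + 4 * (Ep - Em)
    let G : ℝ → ℝ := fun z => ∫ x, (z - x)⁻¹ ∂μ
    let G' : ℝ → ℝ := fun z => -∫ x, ((z - x) ^ 2)⁻¹ ∂μ
    (0 < 1 + G x₀ ^ 2 / G' x₀ ∧ 1 + G x₀ ^ 2 / G' x₀ < 1) ∧
      ∀ n : ℕ, (1 + G x₀ ^ 2 / G' x₀)⁻¹ ≤ (n : ℝ) →
        ∃ ξ : ℝ, ξ ∈ Set.Ioi Ep ∧
          (n : ℝ) * G ξ ^ 2 + ((n : ℝ) - 1) * G' ξ = 0 ∧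
          (∀ ξ' ∈ Set.Ioi Ep, (n : ℝ) * G ξ' ^ 2 + ((n : ℝ) - 1) * G' ξ' = 0 → ξ' = ξ) ∧
          x₀ ≤ ξ ∧
          (∀ z ∈ Set.Ioo Ep ξ, (n : ℝ) * G z ^ 2 + ((n : ℝ) - 1) * G' z < 0) ∧
          (∀ z ∈ Set.Ioi ξ, 0 < (n : ℝ) * G z ^ 2 + ((n : ℝ) - 1) * G' z) := by
  intro Em Ep x₀ G G'
  have hmem := ae_mem_Icc_sInf_sSup_msupp hcompact
  have hb : ∀ᵐ x ∂μ, x ≤ Ep := hmem.mono fun _ hx => hx.2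
  have hx₀ : Ep < x₀ := by linarith [lt_of_ae_mem_Icc hnotdirac hmem]
  have hG (z : ℝ) : G z = cauchyMoment μ 1 z := by simp [G, cauchyMoment]
  have hG' (z : ℝ) : G' z = -cauchyMoment μ 2 z := rfl
  have hτ : 1 + G x₀ ^ 2 / G' x₀ = 1 - cauchyRatio μ x₀ := by
    rw [hG, hG', div_neg, ← sub_eq_add_neg, cauchyRatio]
  have hr₀ := cauchyRatio_lt_one hnotdirac hb hx₀
  refine ⟨by rw [hτ]; constructor <;> linarith [cauchyRatio_pos hb hx₀], fun n hn => ?_⟩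
  rw [hτ] at hn
  have hn₀ : (0 : ℝ) < n := (inv_pos.2 (sub_pos.2 hr₀)).trans_le hn
  obtain ⟨ξ, hξx₀, hrξ⟩ := exists_ge_cauchyRatio_eq hnotdirac hmem hx₀ (v := 1 - (n : ℝ)⁻¹)
    (by linarith [(inv_le_comm₀ (sub_pos.2 hr₀) hn₀).1 hn]) (by linarith [inv_pos.2 hn₀])
  have hξ : Ep < ξ := hx₀.trans_le hξx₀
  have hc (z : ℝ) (hz : Ep < z) : 0 < n * cauchyMoment μ 2 z :=
    mul_pos hn₀ (cauchyMoment_pos hb hz 2)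
  have hF (z : ℝ) (hz : Ep < z) : n * G z ^ 2 + (n - 1) * G' z
      = n * cauchyMoment μ 2 z * (cauchyRatio μ z - cauchyRatio μ ξ) := by
    rw [hG, hG', hrξ, mul_sq_cauchyMoment_sub_eq hn₀.ne' (cauchyMoment_pos hb hz 2).ne']
  have hmono := strictMonoOn_cauchyRatio hnotdirac hb
  refine ⟨ξ, hξ, by rw [hF ξ hξ, sub_self, mul_zero], fun ξ' hξ' h => ?_, hξx₀,
    fun z hz => ?_, fun z hz => ?_⟩
  · rw [hF ξ' hξ', mul_eq_zero, or_iff_right (hc ξ' hξ').ne', sub_eq_zero] at h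
    exact hmono.injOn hξ' hξ h
  · rw [hF z hz.1]
    exact mul_neg_of_pos_of_neg (hc z hz.1) (sub_neg.2 (hmono hz.1 hξ hz.2))
  · have hz' : Ep < z := hξ.trans hz
    rw [hF z hz']
    exact mul_pos (hc z hz') (sub_pos.2 (hmono hξ hz' hz))
end
end
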